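/- Let h : M₁ → M₂ be smooth, X₁, X₂ vector fields on M₁, M₂ with (local) flows Φᵗ_{X₁}, Φᵗ_{X₂}. Then the Trautman lift satisfies (𝓛_{(X₁,X₂)}h)(x) = d/dt|_{t=0} Φ^{−t}_{X₂}(h(Φᵗ_{X₁}(x))), i.e. the pointwise derivative at t = 0 of the curve t ↦ Φ^{−t}_{X₂} ∘ h ∘ Φᵗ_{X₁}(x) equals (T_x h)(X₁) − (X₂)_{h(x)}. -/

import Mathlib

/-!
Write the curve as `G ∘ (t ↦ (-t, h (φ₁ t x)))` with `G (s, y) = φ₂ s y`. Since `φ₂ 0 = id` and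
`s ↦ φ₂ s y` has velocity `X₂ y` at `0`, the differential of `G` at `(0, y)` is
`(s, w) ↦ s • X₂ y + w`; the chain rule, applied to the velocity `(-1, T_x h (X₁ x))` of the inner
curve, gives `T_x h (X₁ x) - X₂ (h x)`.
-/

open Manifold

section

variable {E : Type*} [NormedAddCommGroup E] [NormedSpace ℝ E]
  {H : Type*} [TopologicalSpace H] {I : ModelWithCorners ℝ E H}
  {M : Type*} [TopologicalSpace M] [ChartedSpace H M]
  {E' : Type*} [NormedAddCommGroup E'] [NormedSpace ℝ E']
  {H' : Type*} [TopologicalSpace H'] {I' : ModelWithCorners ℝ E' H'}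
  {M' : Type*} [TopologicalSpace M'] [ChartedSpace H' M']

theorem IsMIntegralCurve.hasMFDerivAt_of_eq {γ : ℝ → M} {X : (x : M) → TangentSpace I x}
    (hγ : IsMIntegralCurve γ X) {t : ℝ} {x : M} (hx : γ t = x) :
    HasMFDerivAt 𝓘(ℝ, ℝ) I γ t ((1 : ℝ →L[ℝ] ℝ).smulRight (X x : E)) := by
  subst hx
  exact hγ t

theorem HasMFDerivAt.comp_curve_of_eq {f : M → M'} {f' : E →L[ℝ] E'} {c : ℝ → M}
    {t₀ : ℝ} {y : M} {w : E} (hf : HasMFDerivAt I I' f y f')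
    (hc : HasMFDerivAt 𝓘(ℝ, ℝ) I c t₀ ((1 : ℝ →L[ℝ] ℝ).smulRight w)) (hcy : c t₀ = y) :
    HasMFDerivAt 𝓘(ℝ, ℝ) I' (f ∘ c) t₀ ((1 : ℝ →L[ℝ] ℝ).smulRight (f' w)) := by
  subst hcy
  exact (hf.comp t₀ hc).congr_mfderiv (by ext; exact map_smul f' _ w)

theorem mfderiv_uncurry_at_zero {φ : ℝ → M → M} {y : M} {v : E}
    (hφ0 : ∀ z, φ 0 z = z)
    (hv : HasMFDerivAt 𝓘(ℝ, ℝ) I (fun t => φ t y) 0 ((1 : ℝ →L[ℝ] ℝ).smulRight v))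
    (hφ : MDifferentiableAt (𝓘(ℝ, ℝ).prod I) I (fun p : ℝ × M => φ p.1 p.2) (0, y)) :
    mfderiv (𝓘(ℝ, ℝ).prod I) I (fun p : ℝ × M => φ p.1 p.2) (0, y) =
      (ContinuousLinearMap.fst ℝ ℝ E).smulRight v + ContinuousLinearMap.snd ℝ ℝ E := by
  have hid : (fun z => φ ((0 : ℝ), y).1 z) = id := funext hφ0
  ext p
  rw [mfderiv_prod_eq_add_apply hφ, hv.mfderiv, hid, mfderiv_id]
  rfl

theorem hasMFDerivAt_uncurry_comp_at_zero {φ : ℝ → M → M} {a : ℝ → ℝ} {c : ℝ → M}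
    {t₀ a' : ℝ} {y : M} {v w : E} (hφ0 : ∀ z, φ 0 z = z)
    (hv : HasMFDerivAt 𝓘(ℝ, ℝ) I (fun t => φ t y) 0 ((1 : ℝ →L[ℝ] ℝ).smulRight v))
    (hφ : MDifferentiableAt (𝓘(ℝ, ℝ).prod I) I (fun p : ℝ × M => φ p.1 p.2) (0, y))
    (ha : HasDerivAt a a' t₀) (ha0 : a t₀ = 0)
    (hc : HasMFDerivAt 𝓘(ℝ, ℝ) I c t₀ ((1 : ℝ →L[ℝ] ℝ).smulRight w)) (hcy : c t₀ = y) :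
    HasMFDerivAt 𝓘(ℝ, ℝ) I (fun t => φ (a t) (c t)) t₀
      ((1 : ℝ →L[ℝ] ℝ).smulRight (a' • v + w)) := by
  have hac : HasMFDerivAt 𝓘(ℝ, ℝ) (𝓘(ℝ, ℝ).prod I) (fun t => (a t, c t)) t₀
      ((1 : ℝ →L[ℝ] ℝ).smulRight ((a', w) : ℝ × E)) :=
    (ha.hasFDerivAt.hasMFDerivAt.prodMk hc).congr_mfderiv (by ext <;> rfl)
  have hcomp := hφ.hasMFDerivAt.comp_curve_of_eq hac (by rw [ha0, hcy])
  rw [mfderiv_uncurry_at_zero hφ0 hv hφ] at hcomp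
  simpa [Function.comp_def] using hcomp

end

/-- The Trautman lift in terms of flows: if `φ₁`, `φ₂` are the flows of the
vector fields `X₁` on `M₁` and `X₂` on `M₂` (each `t ↦ φᵢ t x` is an integral curve of `Xᵢ`
with `φᵢ 0 = id`, and `φ₂` is smooth jointly in `(t, x)`), and `h : M₁ → M₂` is smooth, then
the derivative at `t = 0` of the curve `t ↦ φ₂^{-t} (h (φ₁^t x))` is
`(T_x h)(X₁) − (X₂)_{h(x)}`. -/
theorem stmt4
    {E₁ : Type*} [NormedAddCommGroup E₁] [NormedSpace ℝ E₁]
    {H₁ : Type*} [TopologicalSpace H₁] {I₁ : ModelWithCorners ℝ E₁ H₁}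
    {M₁ : Type*} [TopologicalSpace M₁] [ChartedSpace H₁ M₁]
    {E₂ : Type*} [NormedAddCommGroup E₂] [NormedSpace ℝ E₂]
    {H₂ : Type*} [TopologicalSpace H₂] {I₂ : ModelWithCorners ℝ E₂ H₂}
    {M₂ : Type*} [TopologicalSpace M₂] [ChartedSpace H₂ M₂]
    (h : M₁ → M₂) (hh : MDifferentiable I₁ I₂ h)
    (X₁ : (x : M₁) → TangentSpace I₁ x) (X₂ : (x : M₂) → TangentSpace I₂ x)
    (φ₁ : ℝ → M₁ → M₁) (φ₂ : ℝ → M₂ → M₂)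
    (hφ₁0 : ∀ x, φ₁ 0 x = x) (hφ₂0 : ∀ x, φ₂ 0 x = x)
    (hφ₁ : ∀ x, IsMIntegralCurve (fun t => φ₁ t x) X₁)
    (hφ₂ : ∀ x, IsMIntegralCurve (fun t => φ₂ t x) X₂)
    (hφ₂smooth : ContMDiff (𝓘(ℝ, ℝ).prod I₂) I₂ (⊤ : ℕ∞) (fun p : ℝ × M₂ => φ₂ p.1 p.2))
    (x : M₁) :
    HasMFDerivAt 𝓘(ℝ, ℝ) I₂ (fun t => φ₂ (-t) (h (φ₁ t x))) 0
      ((1 : ℝ →L[ℝ] ℝ).smulRight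
        ((mfderiv I₁ I₂ h x (X₁ x) : E₂) - X₂ (h x))) := by
  have hcurve : HasMFDerivAt 𝓘(ℝ, ℝ) I₂ (fun t => h (φ₁ t x)) 0
      ((1 : ℝ →L[ℝ] ℝ).smulRight (mfderiv I₁ I₂ h x (X₁ x))) :=
    (hh x).hasMFDerivAt.comp_curve_of_eq ((hφ₁ x).hasMFDerivAt_of_eq (hφ₁0 x)) (hφ₁0 x)
  have hflow := hasMFDerivAt_uncurry_comp_at_zero hφ₂0
    ((hφ₂ (h x)).hasMFDerivAt_of_eq (hφ₂0 _)) ((hφ₂smooth _).mdifferentiableAt (by simp))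
    (hasDerivAt_neg 0) neg_zero hcurve (by simp only [hφ₁0])
  have hvec : (-1 : ℝ) • (X₂ (h x) : E₂) + mfderiv I₁ I₂ h x (X₁ x) =
      (mfderiv I₁ I₂ h x (X₁ x) : E₂) - X₂ (h x) := by
    module
  exact hvec ▸ hflow
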